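/- Let w ∈ Sₙ, and let (i₁,…,i_ℓ) be a reduced word for w and (j₁,…,j_m) a reduced word for w⁻¹. Then C_P(σ(i₁,…,i_ℓ)) = (σ(j₁,…,j_m))⁻¹, i.e. d·(σ(i₁,…,i_ℓ)ᵀ)⁻¹·d⁻¹ = (σ(j₁,…,j_m))⁻¹. -/

import Mathlib

open Matrix

noncomputable section

/-- The element `i` of `{1,…,n−1}` viewed in `Fin n` (0-indexed: position `i`). -/
def finA {n : ℕ} (i : Fin (n - 1)) : Fin n := ⟨i.val, by have := i.isLt; omega⟩

/-- The element `i+1` of `{1,…,n}` viewed in `Fin n` (0-indexed: position `i+1`). -/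
def finB {n : ℕ} (i : Fin (n - 1)) : Fin n := ⟨i.val + 1, by have := i.isLt; omega⟩

/-- The Tits representative `σ_i ∈ GL(n,ℂ)` of the simple reflection `s_i = (i,i+1)`:
it agrees with the identity matrix except in rows and columns `i, i+1`, where its entries
are `(σ_i)_{i,i} = (σ_i)_{i+1,i+1} = 0`, `(σ_i)_{i,i+1} = 1`, `(σ_i)_{i+1,i} = −1`. -/
def sigmaMat (n : ℕ) (i : Fin (n - 1)) : Matrix (Fin n) (Fin n) ℂ :=
  1 - single (finA i) (finA i) 1 - single (finB i) (finB i) 1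
    + single (finA i) (finB i) 1 - single (finB i) (finA i) 1

/-- The simple reflection `s_i = (i,i+1)` in the symmetric group `Sₙ`. -/
def simpleRefl {n : ℕ} (i : Fin (n - 1)) : Equiv.Perm (Fin n) := Equiv.swap (finA i) (finB i)

/-- The permutation `s_{i₁} ∘ ⋯ ∘ s_{i_ℓ}` attached to the word `(i₁,…,i_ℓ)`. -/
def wordPerm {n : ℕ} (l : List (Fin (n - 1))) : Equiv.Perm (Fin n) :=
  (l.map simpleRefl).prod

/-- The matrix `σ(i₁,…,i_ℓ) = σ_{i₁} ⋯ σ_{i_ℓ}` attached to the word `(i₁,…,i_ℓ)`. -/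
def wordMat (n : ℕ) (l : List (Fin (n - 1))) : Matrix (Fin n) (Fin n) ℂ :=
  (l.map (sigmaMat n)).prod

/-- The Coxeter length of `w ∈ Sₙ`: the number of inversions. -/
def invCount {n : ℕ} (w : Equiv.Perm (Fin n)) : ℕ :=
  (Finset.univ.filter fun p : Fin n × Fin n => p.1 < p.2 ∧ w p.2 < w p.1).card

/-- `(i₁,…,i_ℓ)` is a reduced word for `w`: the product of the corresponding simple
reflections is `w` and the length of the word equals the number of inversions of `w`. -/
def IsReducedWord {n : ℕ} (l : List (Fin (n - 1))) (w : Equiv.Perm (Fin n)) : Prop :=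
  wordPerm l = w ∧ l.length = invCount w

/-- The diagonal matrix `d` with entries `d_{kk} = (−1)^{k−1}` (1-indexed), used in the
pinned Chevalley involution `C_P(g) = d (gᵀ)⁻¹ d⁻¹` of `GL(n,ℂ)`. -/
def dMat (n : ℕ) : Matrix (Fin n) (Fin n) ℂ := Matrix.diagonal fun k => (-1 : ℂ) ^ (k : ℕ)

end

/-!
`C_P` is multiplicative on all matrices (`(AB)⁻¹ = B⁻¹A⁻¹` holds even for singular matrices,
whose inverse is `0`), and `C_P(σ_i) = σ_i⁻¹`: `σ_i` is orthogonal, and conjugating by `d`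
flips the signs of its two off-diagonal entries, which sit in adjacent rows and columns. Hence
`C_P(σ(i₁,…,i_ℓ)) = σ(i_ℓ,…,i₁)⁻¹`, and `(i_ℓ,…,i₁)` is a reduced word for `w⁻¹`.

It remains to see that `σ` of a reduced word depends only on the permutation (Tits). Along a
reduced word every left factor `s_i` adds exactly one inversion, and the column `q` with
`v q = i` picks up the sign `-1`; so `σ` of a reduced word for `v` sends `e_q` to
`(-1)^#{k > q | v k < v q} e_{v q}`.
-/

open Equiv Finset

section Swap

variable {α : Type*} [LinearOrder α] {a b : α}

lemma Equiv.swap_apply_lt_swap_apply_iff (hab : a ⋖ b) {x y : α} (hxy : ¬(x = a ∧ y = b))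
    (hyx : ¬(x = b ∧ y = a)) : swap a b x < swap a b y ↔ x < y := by
  have hlt := hab.lt
  have h₁ : ∀ c, a < c → b ≤ c := fun c => hab.ge_of_gt
  have h₂ : ∀ c, c < b → c ≤ a := fun c => hab.le_of_lt
  rw [swap_apply_def, swap_apply_def]
  split_ifs <;> grind

end Swap

lemma finA_covBy_finB {n : ℕ} (i : Fin (n - 1)) : finA i ⋖ finB i := by
  simp [finA, finB, Fin.covBy_iff]

section Inversions

variable {n : ℕ}

def colInv (w : Perm (Fin n)) (c : Fin n) : ℕ :=
  #{k | c < k ∧ w k < w c}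

lemma colInv_one (c : Fin n) : colInv 1 c = 0 := by
  simp only [colInv, Perm.one_apply]
  exact card_eq_zero.2 (filter_false_of_mem fun _ _ h => h.1.asymm h.2)

lemma invCount_eq_sum_colInv (w : Perm (Fin n)) : invCount w = ∑ c, colInv w c := by
  simp only [invCount, colInv, card_filter, Fintype.sum_prod_type]

lemma invCount_one : invCount (1 : Perm (Fin n)) = 0 := by
  simp [invCount_eq_sum_colInv, colInv_one]

lemma invCount_inv (w : Perm (Fin n)) : invCount w⁻¹ = invCount w := by
  refine card_nbij' (fun p => (w⁻¹ p.2, w⁻¹ p.1)) (fun p => (w p.2, w p.1)) ?_ ?_ ?_ ?_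
    <;> intro p <;> simp +contextual

variable {a b : Fin n} {v : Perm (Fin n)}

lemma colInv_swap_mul (hab : a ⋖ b) (hv : v⁻¹ a < v⁻¹ b) (c : Fin n) :
    colInv (swap a b * v) c = colInv v c + if v c = a then 1 else 0 := by
  rcases eq_or_ne (v c) a with hc | hc
  · have hcb : c < v.symm b := Perm.eq_inv_iff_eq.mpr hc ▸ hv
    have hinsert : univ.filter (fun k => c < k ∧ (swap a b * v) k < (swap a b * v) c)
        = insert (v⁻¹ b) (univ.filter fun k => c < k ∧ v k < v c) := by
      ext k
      rcases eq_or_ne k (v⁻¹ b) with rfl | hk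
      · simp [hc, hcb, hab.lt]
      · have hkb : v k ≠ b := fun h => hk (Perm.eq_inv_iff_eq.mpr h)
        have hne : a ≠ b := hab.ne
        rw [mem_filter, mem_insert, mem_filter, Perm.mul_apply, Perm.mul_apply,
          swap_apply_lt_swap_apply_iff hab (by grind) (by grind)]
        simp only [mem_univ, true_and, hk, false_or]
    rw [colInv, hinsert, card_insert_of_notMem (by simp [hc, hab.lt.le]), if_pos hc, colInv]
  · rw [if_neg hc, add_zero, colInv, colInv]
    refine congrArg card (filter_congr fun k _ => and_congr_right fun hck => ?_)
    refine swap_apply_lt_swap_apply_iff hab ?_ (by grind)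
    rintro ⟨hka, hcb⟩
    rw [← Perm.eq_inv_iff_eq.mpr hka, ← Perm.eq_inv_iff_eq.mpr hcb] at hv
    exact hck.asymm hv

lemma invCount_swap_mul (hab : a ⋖ b) (hv : v⁻¹ a < v⁻¹ b) :
    invCount (swap a b * v) = invCount v + 1 := by
  simp only [invCount_eq_sum_colInv, colInv_swap_mul hab hv, sum_add_distrib,
    ← v.eq_inv_iff_eq, sum_ite_eq', mem_univ, if_true]

lemma invCount_swap_mul_of_gt (hab : a ⋖ b) (hv : v⁻¹ b < v⁻¹ a) :
    invCount (swap a b * v) + 1 = invCount v := by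
  have h := invCount_swap_mul hab (v := swap a b * v) (by simpa using hv)
  rwa [← mul_assoc, Equiv.swap_mul_self, one_mul, eq_comm] at h

lemma invCount_swap_mul_le (hab : a ⋖ b) (v : Perm (Fin n)) :
    invCount (swap a b * v) ≤ invCount v + 1 := by
  rcases lt_or_gt_of_ne (v⁻¹.injective.ne hab.ne) with h | h
  · exact (invCount_swap_mul hab h).le
  · have := invCount_swap_mul_of_gt hab h
    omega

lemma inv_apply_lt_of_invCount_lt (hab : a ⋖ b) (h : invCount v < invCount (swap a b * v)) :
    v⁻¹ a < v⁻¹ b :=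
  (lt_or_gt_of_ne (v⁻¹.injective.ne hab.ne)).resolve_right fun h' => by
    have := invCount_swap_mul_of_gt hab h'
    omega

end Inversions

section MonomialMatrix

variable {ι R : Type*} [DecidableEq ι] [Semiring R]

def monomialMatrix (w : Perm ι) (ε : ι → R) : Matrix ι ι R :=
  of fun p q => if p = w q then ε q else 0

lemma monomialMatrix_one : monomialMatrix (1 : Perm ι) (fun _ => (1 : R)) = 1 := by
  ext p q
  rw [monomialMatrix, of_apply, one_apply, Perm.one_apply]

lemma monomialMatrix_mul [Fintype ι] (w v : Perm ι) (ε δ : ι → R) :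
    monomialMatrix w ε * monomialMatrix v δ =
      monomialMatrix (w * v) fun q => ε (v q) * δ q := by
  ext p q
  simp only [monomialMatrix, mul_apply, of_apply, mul_ite, mul_zero, sum_ite_eq', mem_univ,
    if_true, ite_mul, zero_mul]
  rfl

lemma monomialMatrix_transpose (w : Perm ι) (ε : ι → R) :
    (monomialMatrix w ε)ᵀ = monomialMatrix w⁻¹ fun p => ε (w⁻¹ p) := by
  ext p q
  simp only [transpose_apply, monomialMatrix, of_apply, Perm.eq_inv_iff_eq]
  obtain rfl | h := eq_or_ne q (w p)
  · simp
  · simp [h, h.symm]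

lemma diagonal_mul_monomialMatrix_mul_diagonal [Fintype ι] (δ δ' : ι → R) (w : Perm ι)
    (ε : ι → R) :
    diagonal δ * monomialMatrix w ε * diagonal δ' =
      monomialMatrix w fun q => δ (w q) * ε q * δ' q := by
  ext p q
  simp only [monomialMatrix, diagonal_mul, mul_diagonal, of_apply]
  split_ifs with h <;> simp [h]

lemma monomialMatrix_mul_transpose [Fintype ι] (w : Perm ι) {ε : ι → R}
    (hε : ∀ q, ε q * ε q = 1) :
    monomialMatrix w ε * (monomialMatrix w ε)ᵀ = 1 := by
  simp [monomialMatrix_transpose, monomialMatrix_mul, hε, monomialMatrix_one]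

end MonomialMatrix

section Tits

variable {n : ℕ}

lemma sigmaMat_eq_monomialMatrix (i : Fin (n - 1)) :
    sigmaMat n i = monomialMatrix (simpleRefl i) fun k => if k = finA i then -1 else 1 := by
  have hA : ((finA i : Fin n) : ℕ) = i := rfl
  have hB : ((finB i : Fin n) : ℕ) = i + 1 := rfl
  ext p k
  simp only [sigmaMat, monomialMatrix, simpleRefl, swap_apply_def, Matrix.sub_apply,
    Matrix.add_apply, Matrix.one_apply, single, of_apply]
  split_ifs <;> simp only [Fin.ext_iff, hA, hB] at * <;> first | omega | norm_num

lemma sigmaMat_mul_transpose (i : Fin (n - 1)) : sigmaMat n i * (sigmaMat n i)ᵀ = 1 := by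
  rw [sigmaMat_eq_monomialMatrix]
  exact monomialMatrix_mul_transpose _ fun k => by split_ifs <;> norm_num

lemma dMat_mul_sigmaMat_mul_dMat (i : Fin (n - 1)) :
    dMat n * sigmaMat n i * dMat n = (sigmaMat n i)ᵀ := by
  rw [sigmaMat_eq_monomialMatrix, dMat, diagonal_mul_monomialMatrix_mul_diagonal,
    monomialMatrix_transpose, simpleRefl, swap_inv]
  congr 1
  funext q
  have hA : ((finA i : Fin n) : ℕ) = i := rfl
  have hB : ((finB i : Fin n) : ℕ) = i + 1 := rfl
  rw [swap_apply_def]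
  split_ifs <;> simp_all [pow_succ, Fin.ext_iff] <;> simp [← mul_pow]

lemma dMat_mul_self (n : ℕ) : dMat n * dMat n = 1 := by
  simp [dMat, ← mul_pow]

lemma inv_dMat (n : ℕ) : (dMat n)⁻¹ = dMat n :=
  inv_eq_right_inv (dMat_mul_self n)

noncomputable def chevalleyInvolution (n : ℕ) :
    Matrix (Fin n) (Fin n) ℂ →* Matrix (Fin n) (Fin n) ℂ where
  toFun g := dMat n * (gᵀ)⁻¹ * (dMat n)⁻¹
  map_one' := by simp [inv_dMat, dMat_mul_self]
  map_mul' g h := by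
    simp only [transpose_mul, Matrix.mul_inv_rev, inv_dMat, Matrix.mul_assoc]
    rw [← Matrix.mul_assoc (dMat n) (dMat n), dMat_mul_self, Matrix.one_mul]

lemma chevalleyInvolution_apply (g : Matrix (Fin n) (Fin n) ℂ) :
    chevalleyInvolution n g = dMat n * (gᵀ)⁻¹ * (dMat n)⁻¹ :=
  rfl

lemma chevalleyInvolution_sigmaMat (i : Fin (n - 1)) :
    chevalleyInvolution n (sigmaMat n i) = (sigmaMat n i)⁻¹ := by
  have h := sigmaMat_mul_transpose i
  rw [chevalleyInvolution_apply, inv_eq_left_inv h, inv_dMat, inv_eq_right_inv h,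
    dMat_mul_sigmaMat_mul_dMat]

lemma chevalleyInvolution_wordMat (l : List (Fin (n - 1))) :
    chevalleyInvolution n (wordMat n l) = (wordMat n l.reverse)⁻¹ := by
  rw [wordMat, map_list_prod, wordMat, list_prod_inv_reverse]
  simp only [List.map_reverse, List.reverse_reverse, List.map_map, Function.comp_def,
    chevalleyInvolution_sigmaMat]

end Tits

section ReducedWords

variable {n : ℕ}

noncomputable def titsMat (w : Perm (Fin n)) : Matrix (Fin n) (Fin n) ℂ :=
  monomialMatrix w fun q => (-1) ^ colInv w q

lemma titsMat_one : titsMat (1 : Perm (Fin n)) = 1 := by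
  simp [titsMat, colInv_one, monomialMatrix_one]

lemma sigmaMat_mul_titsMat {i : Fin (n - 1)} {v : Perm (Fin n)}
    (hv : v⁻¹ (finA i) < v⁻¹ (finB i)) :
    sigmaMat n i * titsMat v = titsMat (simpleRefl i * v) := by
  rw [sigmaMat_eq_monomialMatrix, titsMat, titsMat, monomialMatrix_mul, simpleRefl]
  simp only [colInv_swap_mul (finA_covBy_finB i) hv]
  congr 1
  funext q
  split_ifs <;> simp [pow_succ]

lemma wordPerm_cons (i : Fin (n - 1)) (l : List (Fin (n - 1))) :
    wordPerm (i :: l) = simpleRefl i * wordPerm l := by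
  rw [wordPerm, List.map_cons, List.prod_cons, wordPerm]

lemma wordMat_cons (i : Fin (n - 1)) (l : List (Fin (n - 1))) :
    wordMat n (i :: l) = sigmaMat n i * wordMat n l := by
  rw [wordMat, List.map_cons, List.prod_cons, wordMat]

lemma simpleRefl_inv (i : Fin (n - 1)) : (simpleRefl i)⁻¹ = simpleRefl (n := n) i :=
  swap_inv _ _

lemma wordPerm_reverse (l : List (Fin (n - 1))) :
    wordPerm (n := n) l.reverse = (wordPerm l)⁻¹ := by
  rw [wordPerm, wordPerm, List.prod_inv_reverse, List.map_map, List.map_reverse]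
  simp only [Function.comp_def, simpleRefl_inv]

lemma invCount_wordPerm_le (l : List (Fin (n - 1))) :
    invCount (wordPerm (n := n) l) ≤ l.length := by
  induction l with
  | nil => simp [wordPerm, invCount_one]
  | cons i l ih =>
    rw [wordPerm_cons, List.length_cons]
    exact (invCount_swap_mul_le (finA_covBy_finB i) _).trans (by omega)

lemma wordMat_eq_titsMat_of_length_eq {l : List (Fin (n - 1))}
    (h : l.length = invCount (wordPerm (n := n) l)) : wordMat n l = titsMat (wordPerm l) := by
  induction l with
  | nil => simp [wordMat, wordPerm, titsMat_one]
  | cons i l ih =>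
    rw [wordPerm_cons, simpleRefl, List.length_cons] at h
    have hle := invCount_swap_mul_le (finA_covBy_finB i) (wordPerm (n := n) l)
    have hl := invCount_wordPerm_le (n := n) l
    have hv := inv_apply_lt_of_invCount_lt (finA_covBy_finB i) (v := wordPerm l) (by omega)
    rw [wordMat_cons, wordPerm_cons, ih (by omega), sigmaMat_mul_titsMat hv]

lemma IsReducedWord.wordMat_eq_titsMat {l : List (Fin (n - 1))} {w : Perm (Fin n)}
    (h : IsReducedWord l w) : wordMat n l = titsMat w := by
  obtain ⟨rfl, h⟩ := h
  exact wordMat_eq_titsMat_of_length_eq h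

lemma IsReducedWord.reverse {l : List (Fin (n - 1))} {w : Perm (Fin n)}
    (h : IsReducedWord l w) : IsReducedWord l.reverse w⁻¹ :=
  ⟨by rw [wordPerm_reverse, h.1], by rw [List.length_reverse, invCount_inv, h.2]⟩

end ReducedWords

theorem chevalley_of_tits_representative_general (n : ℕ) (w : Equiv.Perm (Fin n))
    (l m : List (Fin (n - 1))) (hl : IsReducedWord l w) (hm : IsReducedWord m w⁻¹) :
    dMat n * ((wordMat n l)ᵀ)⁻¹ * (dMat n)⁻¹ = (wordMat n m)⁻¹ := by
  rw [← chevalleyInvolution_apply, chevalleyInvolution_wordMat, hl.reverse.wordMat_eq_titsMat,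
    hm.wordMat_eq_titsMat]

/-- If `(i₁,…,i_ℓ)` is a reduced word for `w ∈ Sₙ` and `(j₁,…,j_m)` a
reduced word for `w⁻¹`, then the pinned Chevalley involution
`C_P(g) = d·(gᵀ)⁻¹·d⁻¹` (with `d = diag((−1)^{k−1})`) satisfies
`C_P(σ(i₁,…,i_ℓ)) = σ(j₁,…,j_m)⁻¹`. -/
theorem chevalley_of_tits_representative (n : ℕ) (hn : 1 ≤ n) (w : Equiv.Perm (Fin n))
    (l m : List (Fin (n - 1))) (hl : IsReducedWord l w) (hm : IsReducedWord m w⁻¹) :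
    dMat n * ((wordMat n l)ᵀ)⁻¹ * (dMat n)⁻¹ = (wordMat n m)⁻¹ :=
  chevalley_of_tits_representative_general n w l m hl hm
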